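/- Let K be a field of characteristic 0, n ∈ ℕ, W the n-th Weyl algebra over K, w ∈ W, ν ∈ ℕ₀^{2n}, and ω ∈ Ω. Then for all s ∈ ℕ with s > deg^ν(w) − deg^ν(σ^ω(w)) it holds τ^ν(σ^ω(w)) = σ^{ν+sω}(w) in K[X,Y], via the identifications ψ^ω : K[X,Y] ≅ Gr^ω W, ψ^{ν+sω} : K[X,Y] ≅ Gr^{ν+sω} W, and Gr^ν K[X,Y] ≅ K[X,Y]. -/

import Mathlib

open MvPolynomial

set_option maxHeartbeats 1000000
set_option synthInstance.maxHeartbeats 400000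

namespace WeylPaper

variable (K : Type) [Field K] [CharZero K] (n : ℕ)

/-- `K[X_1,…,X_n]`, the polynomial ring on which the Weyl algebra acts. -/
abbrev PolyN := MvPolynomial (Fin n) K

/-- `K[X,Y] = K[X_1,…,X_n,Y_1,…,Y_n]`, with the `X`-variables indexed by `Sum.inl`
and the `Y`-variables indexed by `Sum.inr`. -/
abbrev KXY := MvPolynomial (Fin n ⊕ Fin n) K

/-- Exponent vectors `(λ,μ) ∈ ℕ₀ⁿ × ℕ₀ⁿ`. -/
abbrev Exps := (Fin n ⊕ Fin n) →₀ ℕ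

/-- The operator `ξ_i : p ↦ X_i · p` on `K[X]`. -/
noncomputable def xiOp (i : Fin n) : Module.End K (PolyN K n) :=
  LinearMap.mulLeft K (X i)

/-- The operator `∂_i = ∂/∂X_i` on `K[X]`. -/
noncomputable def delOp (i : Fin n) : Module.End K (PolyN K n) :=
  (pderiv i).toLinearMap

/-- The `n`-th Weyl algebra over `K`, as the `K`-subalgebra of `End_K K[X]`
generated by `ξ_1,…,ξ_n,∂_1,…,∂_n`. -/
noncomputable def weylAlg : Subalgebra K (Module.End K (PolyN K n)) :=
  Algebra.adjoin K (Set.range (xiOp K n) ∪ Set.range (delOp K n))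

/-- The normal monomial `ξ^λ ∂^μ`, encoded by `γ = (λ,μ) : Exps n`. -/
noncomputable def wmono (γ : Exps n) : Module.End K (PolyN K n) :=
  (List.ofFn fun i : Fin n => xiOp K n i ^ γ (Sum.inl i)).prod *
    (List.ofFn fun i : Fin n => delOp K n i ^ γ (Sum.inr i)).prod

/-- The weight `ω·(λ⃗μ)` of an exponent vector. -/
def wt (ω : Fin n ⊕ Fin n → ℕ) (γ : Exps n) : ℕ :=
  γ.sum fun j k => ω j * k

/-- The natural polynomial region `Ω`: all weight vectors `ω ∈ ℕ₀^{2n}` with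
`ω_i + ω_{n+i} > 0` for all `i`. -/
def inOmega (ω : Fin n ⊕ Fin n → ℕ) : Prop :=
  ∀ i : Fin n, 0 < ω (Sum.inl i) + ω (Sum.inr i)

variable {K n}
variable (b : Module.Basis (Exps n) K (weylAlg K n))

/-- The statement that the normal monomials `ξ^λ∂^μ` are the given `K`-basis of `W`. -/
def IsMonomialBasis : Prop :=
  ∀ γ : Exps n, (↑(b γ) : Module.End K (PolyN K n)) = wmono K n γ

/-- The support of `w ∈ W`: exponents occurring in the canonical form of `w`. -/
noncomputable def wsupp (w : weylAlg K n) : Finset (Exps n) :=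
  (b.repr w).support

/-- The `ω`-degree of `w ∈ W`, an element of `ℤ ∪ {-∞}`. -/
noncomputable def wdeg (ω : Fin n ⊕ Fin n → ℕ) (w : weylAlg K n) : WithBot ℤ :=
  (b.repr w).support.sup fun γ => ((wt n ω γ : ℤ) : WithBot ℤ)

/-- The `ω`-degree filtration `F^ω_i W = {w : deg^ω w ≤ i}` of the Weyl algebra. -/
noncomputable def FW (ω : Fin n ⊕ Fin n → ℕ) (i : ℤ) : Submodule K (weylAlg K n) :=
  Submodule.comap b.repr.toLinearMap
    (Finsupp.supported K K {γ : Exps n | (wt n ω γ : ℤ) ≤ i})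

/-- The `i`-th `ω`-symbol `σ^ω_i(w)`, i.e. the part of (the canonical form of) `w`
of `ω`-weight exactly `i`, regarded as an element of `K[X,Y]` via `ψ^ω`. -/
noncomputable def symbAt (ω : Fin n ⊕ Fin n → ℕ) (i : ℤ) (w : weylAlg K n) : KXY K n :=
  ∑ γ ∈ (b.repr w).support.filter (fun γ => (wt n ω γ : ℤ) = i),
    monomial γ (b.repr w γ)

/-- The `ω`-symbol `σ^ω(w)`: the part of `w` of highest `ω`-weight, regarded as an
element of `K[X,Y]` via `ψ^ω`; `σ^ω(0) = 0`. -/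
noncomputable def symb (ω : Fin n ⊕ Fin n → ℕ) (w : weylAlg K n) : KXY K n :=
  ∑ γ ∈ (b.repr w).support.filter
      (fun γ => ((wt n ω γ : ℤ) : WithBot ℤ) = wdeg b ω w),
    monomial γ (b.repr w γ)

variable (n) in
/-- The `ν`-degree of a polynomial in `K[X,Y]`, an element of `ℤ ∪ {-∞}`. -/
noncomputable def pdeg (ν : Fin n ⊕ Fin n → ℕ) (p : KXY K n) : WithBot ℤ :=
  p.support.sup fun γ => ((wt n ν γ : ℤ) : WithBot ℤ)

variable (n) in
/-- The `ν`-degree filtration `F^ν_i K[X,Y]`. -/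
noncomputable def FP (ν : Fin n ⊕ Fin n → ℕ) (i : ℤ) : Submodule K (KXY K n) where
  carrier := {p | ∀ γ ∈ p.support, (wt n ν γ : ℤ) ≤ i}
  add_mem' := by
    intro p q hp hq γ hγ
    rcases Finset.mem_union.mp (MvPolynomial.support_add hγ) with h | h
    exacts [hp γ h, hq γ h]
  zero_mem' := by simp
  smul_mem' := by
    intro c p hp γ hγ
    exact hp γ (MvPolynomial.support_smul hγ)

variable (n) in
/-- The `i`-th `ν`-symbol `τ^ν_i(p)` of a polynomial: its part of `ν`-weight exactly `i`,
regarded as an element of `K[X,Y]` via the identification `Gr^ν K[X,Y] ≅ K[X,Y]`. -/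
noncomputable def psymbAt (ν : Fin n ⊕ Fin n → ℕ) (i : ℤ) (p : KXY K n) : KXY K n :=
  ∑ γ ∈ p.support.filter (fun γ => (wt n ν γ : ℤ) = i), monomial γ (coeff γ p)

variable (n) in
/-- The `ν`-symbol (leading `ν`-form) `τ^ν(p)` of a polynomial; `τ^ν(0) = 0`. -/
noncomputable def psymb (ν : Fin n ⊕ Fin n → ℕ) (p : KXY K n) : KXY K n :=
  ∑ γ ∈ p.support.filter (fun γ => ((wt n ν γ : ℤ) : WithBot ℤ) = pdeg n ν p),
    monomial γ (coeff γ p)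

/-- The ideal `Gr^ω L` of `K[X,Y]` associated to a left ideal `L` of `W`:
it is generated (indeed spanned) by the `ω`-symbols of the elements of `L`. -/
noncomputable def grW (ω : Fin n ⊕ Fin n → ℕ)
    (L : Submodule (weylAlg K n) (weylAlg K n)) : Ideal (KXY K n) :=
  Ideal.span (symb b ω '' L)

variable (n) in
/-- The ideal `Gr^ν I` of `K[X,Y]` associated to an ideal `I` of `K[X,Y]`:
it is generated (indeed spanned) by the `ν`-symbols of the elements of `I`. -/
noncomputable def grP (ν : Fin n ⊕ Fin n → ℕ) (I : Ideal (KXY K n)) : Ideal (KXY K n) :=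
  Ideal.span (psymb n ν '' I)


/-- A normal ordering (term ordering) on exponent vectors. -/
structure NormalOrdering (n : ℕ) where
  le : Exps n → Exps n → Prop
  refl : ∀ γ, le γ γ
  trans : ∀ {γ δ ε}, le γ δ → le δ ε → le γ ε
  antisymm : ∀ {γ δ}, le γ δ → le δ γ → γ = δ
  total : ∀ γ δ, le γ δ ∨ le δ γ
  bot : ∀ γ, le 0 γ
  compat : ∀ {γ δ} (α), le γ δ → le (γ + α) (δ + α)

theorem wt_zero (ν : Fin n ⊕ Fin n → ℕ) : wt n ν 0 = 0 :=
  Finsupp.sum_zero_index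

theorem wt_add (ν : Fin n ⊕ Fin n → ℕ) (γ δ : Exps n) :
    wt n ν (γ + δ) = wt n ν γ + wt n ν δ :=
  Finsupp.sum_add_index' (fun j => mul_zero (ν j)) (fun j k l => mul_add (ν j) k l)

/-- The normal ordering `≼_ν` induced by a weight `ν` and a normal ordering `≼`:
compare first by `ν`-weight, break ties by `≼`. -/
def NormalOrdering.induced (o : NormalOrdering n) (ν : Fin n ⊕ Fin n → ℕ) :
    NormalOrdering n where
  le γ δ := wt n ν γ < wt n ν δ ∨ (wt n ν γ = wt n ν δ ∧ o.le γ δ)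
  refl γ := Or.inr ⟨rfl, o.refl γ⟩
  trans := by
    rintro γ δ ε (h | ⟨h, h'⟩) (g | ⟨g, g'⟩)
    · exact Or.inl (h.trans g)
    · exact Or.inl (g ▸ h)
    · exact Or.inl (h ▸ g)
    · exact Or.inr ⟨h.trans g, o.trans h' g'⟩
  antisymm := by
    rintro γ δ (h | ⟨h, h'⟩) (g | ⟨g, g'⟩)
    · omega
    · omega
    · omega
    · exact o.antisymm h' g'
  total := by
    intro γ δ
    rcases Nat.lt_trichotomy (wt n ν γ) (wt n ν δ) with h | h | h
    · exact Or.inl (Or.inl h)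
    · rcases o.total γ δ with h' | h'
      · exact Or.inl (Or.inr ⟨h, h'⟩)
      · exact Or.inr (Or.inr ⟨h.symm, h'⟩)
    · exact Or.inr (Or.inl h)
  bot := by
    intro γ
    rcases Nat.eq_zero_or_pos (wt n ν γ) with h | h
    · exact Or.inr ⟨by rw [wt_zero, h], o.bot γ⟩
    · exact Or.inl (by rw [wt_zero]; exact h)
  compat := by
    rintro γ δ α (h | ⟨h, h'⟩)
    · exact Or.inl (by rw [wt_add, wt_add]; omega)
    · exact Or.inr ⟨by rw [wt_add, wt_add, h], o.compat α h'⟩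

variable (b : Module.Basis (Exps n) K (weylAlg K n))

/-- `γ` is the `≼`-leading exponent of `w ∈ W`. -/
def IsLeadExpW (o : NormalOrdering n) (w : weylAlg K n) (γ : Exps n) : Prop :=
  γ ∈ (b.repr w).support ∧ ∀ δ ∈ (b.repr w).support, o.le δ γ

/-- The leading term ideal `LT_≼(S) ⊆ K[X,Y]` of a set `S ⊆ W`. -/
noncomputable def ltIdealW (o : NormalOrdering n) (S : Set (weylAlg K n)) :
    Ideal (KXY K n) :=
  Ideal.span {q | ∃ w ∈ S, w ≠ 0 ∧ ∃ γ, IsLeadExpW b o w γ ∧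
    q = MvPolynomial.monomial γ (1 : K)}

variable (n) in
/-- `γ` is the `≼`-leading exponent of a polynomial `p ∈ K[X,Y]`. -/
def IsLeadExpP (o : NormalOrdering n) (p : KXY K n) (γ : Exps n) : Prop :=
  γ ∈ p.support ∧ ∀ δ ∈ p.support, o.le δ γ

variable (n) in
/-- The leading term ideal `LT_≼(S) ⊆ K[X,Y]` of a set `S ⊆ K[X,Y]`. -/
noncomputable def ltIdealP (o : NormalOrdering n) (S : Set (KXY K n)) :
    Ideal (KXY K n) :=
  Ideal.span {q | ∃ p ∈ S, p ≠ 0 ∧ ∃ γ, IsLeadExpP n o p γ ∧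
    q = MvPolynomial.monomial γ (1 : K)}

/-- `B` is a `≼`-Gröbner basis of the left ideal `L ⊆ W`. -/
def IsGroebnerW (o : NormalOrdering n) (L : Submodule (weylAlg K n) (weylAlg K n))
    (B : Finset (weylAlg K n)) : Prop :=
  (B : Set (weylAlg K n)) ⊆ L ∧
    Submodule.span (weylAlg K n) (B : Set (weylAlg K n)) = L ∧
    ltIdealW b o L = ltIdealW b o B

/-- `U` is a universal Gröbner basis of the left ideal `L ⊆ W`. -/
def IsUnivGroebnerW (L : Submodule (weylAlg K n) (weylAlg K n))
    (U : Finset (weylAlg K n)) : Prop :=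
  ∀ o : NormalOrdering n, IsGroebnerW b o L U

variable (n) in
/-- `B` is a `≼`-Gröbner basis of the ideal `I ⊆ K[X,Y]`. -/
def IsGroebnerP (o : NormalOrdering n) (I : Ideal (KXY K n))
    (B : Finset (KXY K n)) : Prop :=
  (B : Set (KXY K n)) ⊆ I ∧
    Ideal.span (B : Set (KXY K n)) = I ∧
    ltIdealP n o (I : Set (KXY K n)) = ltIdealP n o B

section Modules

variable {M : Type} [AddCommGroup M] [Module (weylAlg K n) M]

/-- `FM` is a good `F^ω W`-filtration of the left `W`-module `M`. -/
def IsGoodFiltrationW (ω : Fin n ⊕ Fin n → ℕ) (FM : ℤ → AddSubgroup M) : Prop :=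
  (∀ m : M, ∃ i, m ∈ FM i) ∧
  ∃ (t : ℕ) (g : Fin t → M) (p : Fin t → ℤ), ∀ i : ℤ,
    FM i = ⨆ j : Fin t, (Submodule.toAddSubgroup (M := weylAlg K n) (FW b ω (i - p j))).map
      ((smulAddHom (weylAlg K n) M).flip (g j))

/-- A realization of the associated graded module `Gr^ω M` of `(M, F^ω M)` as a
`K[X,Y]`-module `G` (via the identification `ψ^ω : K[X,Y] ≅ Gr^ω W`):
`emb i` sends `x ∈ F^ω_i M` to its symbol `σ_i(x) ∈ Gr^ω_i M ⊆ G`. -/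
structure GrRealW (ω : Fin n ⊕ Fin n → ℕ) (FM : ℤ → AddSubgroup M)
    (G : ModuleCat (KXY K n)) where
  emb : ∀ i : ℤ, FM i →+ G
  emb_eq_zero_iff : ∀ (i : ℤ) (x : FM i), emb i x = 0 ↔ (x : M) ∈ FM (i - 1)
  emb_smul : ∀ (i j : ℤ) (w : weylAlg K n), w ∈ FW b ω i → ∀ (m : M) (hm : m ∈ FM j)
      (hm' : w • m ∈ FM (i + j)),
      symbAt b ω i w • emb j ⟨m, hm⟩ = emb (i + j) ⟨w • m, hm'⟩
  internal : DirectSum.IsInternal fun i : ℤ => (emb i).range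

end Modules

section PolyModules

variable {G : Type} [AddCommGroup G] [Module (KXY K n) G]

variable (n) in
/-- `FG` is a good `F^ν K[X,Y]`-filtration of the `K[X,Y]`-module `G`. -/
def IsGoodFiltrationP (ν : Fin n ⊕ Fin n → ℕ) (FG : ℤ → AddSubgroup G) : Prop :=
  (∀ x : G, ∃ i, x ∈ FG i) ∧
  ∃ (t : ℕ) (g : Fin t → G) (p : Fin t → ℤ), ∀ i : ℤ,
    FG i = ⨆ j : Fin t, ((FP n ν (i - p j)).toAddSubgroup).map
      ((smulAddHom (KXY K n) G).flip (g j))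

variable (n) in
/-- A realization of the associated graded module `Gr^ν G` of a filtered
`K[X,Y]`-module `(G, F^ν G)` as a `K[X,Y]`-module `H`
(via the identification `Gr^ν K[X,Y] ≅ K[X,Y]`). -/
structure GrRealP (ν : Fin n ⊕ Fin n → ℕ) (FG : ℤ → AddSubgroup G)
    (H : ModuleCat (KXY K n)) where
  emb : ∀ i : ℤ, FG i →+ H
  emb_eq_zero_iff : ∀ (i : ℤ) (x : FG i), emb i x = 0 ↔ (x : G) ∈ FG (i - 1)
  emb_smul : ∀ (i j : ℤ) (q : KXY K n), q ∈ FP n ν i → ∀ (x : G) (hx : x ∈ FG j)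
      (hx' : q • x ∈ FG (i + j)),
      psymbAt n ν i q • emb j ⟨x, hx⟩ = emb (i + j) ⟨q • x, hx'⟩
  internal : DirectSum.IsInternal fun i : ℤ => (emb i).range

end PolyModules

/-- A realization of the associated graded ring `Gr^ω W` as a `K`-algebra `A`:
`emb i` sends `w ∈ F^ω_i W` to its symbol `σ^ω_i(w) ∈ Gr^ω_i W ⊆ A`. -/
structure GrRingRealW (ω : Fin n ⊕ Fin n → ℕ) (A : Type) [Ring A] [Algebra K A] where
  emb : ∀ i : ℤ, FW b ω i →ₗ[K] A
  emb_eq_zero_iff : ∀ (i : ℤ) (x : FW b ω i),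
    emb i x = 0 ↔ (x : weylAlg K n) ∈ FW b ω (i - 1)
  emb_mul : ∀ (i j : ℤ) (x : FW b ω i) (y : FW b ω j)
      (h : (x : weylAlg K n) * (y : weylAlg K n) ∈ FW b ω (i + j)),
      emb i x * emb j y = emb (i + j) ⟨(x : weylAlg K n) * y, h⟩
  emb_one : ∀ h : (1 : weylAlg K n) ∈ FW b ω 0, emb 0 ⟨1, h⟩ = 1
  internal : DirectSum.IsInternal fun i : ℤ => LinearMap.range (emb i)

end WeylPaper

/-!
Reading `w` as the polynomial `p` of its canonical form, both sides are leading weighted forms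
of `p`. Put `d = deg^ω p` and `e = deg^ν (σ^ω p)`. A monomial of `p` of `ω`-weight `d` has
`(ν + sω)`-weight at most `e + s d`, with equality iff its `ν`-weight is `e`. A monomial of
`ω`-weight `< d` loses at least `s` in the `sω`-part, and its `ν`-weight is at most
`deg^ν p < s + e`, so its `(ν + sω)`-weight stays below `e + s d`. Hence the
`(ν + sω)`-leading form of `p` consists exactly of the monomials of `τ^ν (σ^ω p)`.
-/

namespace Finsupp

theorem weight_add_smul {σ M : Type*} [AddCommMonoid M] (ν ω : σ → M) (s : ℕ) (d : σ →₀ ℕ) :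
    weight (ν + s • ω) d = weight ν d + s • weight ω d := by
  simp only [weight_apply, Pi.add_apply, Pi.smul_apply, smul_add, sum, Finset.sum_add_distrib,
    Finset.smul_sum, smul_comm s]

end Finsupp

namespace MvPolynomial

variable {σ R : Type*} [CommSemiring R]

noncomputable def leadingWeightedForm (w : σ → ℕ) (p : MvPolynomial σ R) : MvPolynomial σ R :=
  weightedHomogeneousComponent w (weightedTotalDegree w p) p

theorem coeff_leadingWeightedForm (w : σ → ℕ) (p : MvPolynomial σ R) (d : σ →₀ ℕ) :
    coeff d (leadingWeightedForm w p) =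
      if Finsupp.weight w d = weightedTotalDegree w p then coeff d p else 0 :=
  coeff_weightedHomogeneousComponent _ _ d

theorem leadingWeightedForm_zero (w : σ → ℕ) :
    leadingWeightedForm w (0 : MvPolynomial σ R) = 0 :=
  map_zero _

theorem support_leadingWeightedForm (w : σ → ℕ) (p : MvPolynomial σ R) :
    (leadingWeightedForm w p).support =
      {d ∈ p.support | Finsupp.weight w d = weightedTotalDegree w p} :=
  support_weightedHomogeneousComponent _ p

theorem exists_mem_support_weight_eq_weightedTotalDegree (w : σ → ℕ) {p : MvPolynomial σ R}
    (hp : p ≠ 0) : ∃ d ∈ p.support, Finsupp.weight w d = weightedTotalDegree w p :=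
  let ⟨d, hd, h⟩ := Finset.exists_mem_eq_sup p.support (support_nonempty.mpr hp) _
  ⟨d, hd, h.symm⟩

theorem leadingWeightedForm_ne_zero (w : σ → ℕ) {p : MvPolynomial σ R} (hp : p ≠ 0) :
    leadingWeightedForm w p ≠ 0 := by
  obtain ⟨d, hd, hdeg⟩ := exists_mem_support_weight_eq_weightedTotalDegree w hp
  rw [← support_nonempty, support_leadingWeightedForm]
  exact ⟨d, Finset.mem_filter.mpr ⟨hd, hdeg⟩⟩

section Perturbation

variable {ν ω : σ → ℕ} {s : ℕ} {p : MvPolynomial σ R}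

theorem weight_add_smul_le_of_mem_support
    (h : weightedTotalDegree ν p < s + weightedTotalDegree ν (leadingWeightedForm ω p))
    {d : σ →₀ ℕ} (hd : d ∈ p.support) :
    Finsupp.weight (ν + s • ω) d ≤
        weightedTotalDegree ν (leadingWeightedForm ω p) + s * weightedTotalDegree ω p ∧
      (Finsupp.weight (ν + s • ω) d =
          weightedTotalDegree ν (leadingWeightedForm ω p) + s * weightedTotalDegree ω p ↔
        Finsupp.weight ν d = weightedTotalDegree ν (leadingWeightedForm ω p) ∧
          Finsupp.weight ω d = weightedTotalDegree ω p) := by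
  rw [Finsupp.weight_add_smul, smul_eq_mul]
  have hω := le_weightedTotalDegree ω hd
  have hν := le_weightedTotalDegree ν hd
  rcases hω.eq_or_lt with hωd | hωd
  · have hd' : d ∈ (leadingWeightedForm ω p).support := by
      rw [support_leadingWeightedForm]; exact Finset.mem_filter.mpr ⟨hd, hωd⟩
    have := le_weightedTotalDegree ν hd'
    rw [hωd]
    omega
  · have : s * Finsupp.weight ω d + s ≤ s * weightedTotalDegree ω p := by nlinarith
    refine ⟨by omega, fun _ => by omega, fun ⟨_, h1⟩ => by omega⟩

theorem weightedTotalDegree_add_smul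
    (h : weightedTotalDegree ν p < s + weightedTotalDegree ν (leadingWeightedForm ω p))
    (hp : p ≠ 0) :
    weightedTotalDegree (ν + s • ω) p =
      weightedTotalDegree ν (leadingWeightedForm ω p) + s * weightedTotalDegree ω p := by
  obtain ⟨d, hd, hdeg⟩ := exists_mem_support_weight_eq_weightedTotalDegree ν
    (leadingWeightedForm_ne_zero ω hp)
  rw [support_leadingWeightedForm, Finset.mem_filter] at hd
  refine le_antisymm (Finset.sup_le fun e he => (weight_add_smul_le_of_mem_support h he).1) ?_
  rw [← ((weight_add_smul_le_of_mem_support h hd.1).2).mpr ⟨hdeg, hd.2⟩]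
  exact le_weightedTotalDegree _ hd.1

theorem leadingWeightedForm_leadingWeightedForm
    (h : weightedTotalDegree ν p < s + weightedTotalDegree ν (leadingWeightedForm ω p)) :
    leadingWeightedForm ν (leadingWeightedForm ω p) = leadingWeightedForm (ν + s • ω) p := by
  rcases eq_or_ne p 0 with rfl | hp
  · simp only [leadingWeightedForm_zero]
  ext d
  simp only [coeff_leadingWeightedForm, weightedTotalDegree_add_smul h hp]
  by_cases hd : d ∈ p.support
  · simp only [((weight_add_smul_le_of_mem_support h hd).2), ite_and]
  · simp [notMem_support_iff.mp hd]

end Perturbation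

end MvPolynomial

namespace WeylPaper

variable {K : Type} [Field K] {n : ℕ}

theorem wt_eq_weight (ω : Fin n ⊕ Fin n → ℕ) (γ : Exps n) : wt n ω γ = Finsupp.weight ω γ := by
  simp only [wt, Finsupp.weight_apply, smul_eq_mul, mul_comm]

theorem pdeg_of_ne_zero (ν : Fin n ⊕ Fin n → ℕ) {p : KXY K n} (hp : p ≠ 0) :
    pdeg n ν p = ((weightedTotalDegree ν p : ℕ) : WithBot ℤ) := by
  apply le_antisymm
  · refine Finset.sup_le fun γ hγ => ?_
    rw [wt_eq_weight]
    exact_mod_cast le_weightedTotalDegree ν hγ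
  · obtain ⟨γ, hγ, hdeg⟩ := exists_mem_support_weight_eq_weightedTotalDegree ν hp
    rw [← hdeg, ← wt_eq_weight]
    exact Finset.le_sup (f := fun γ => ((wt n ν γ : ℤ) : WithBot ℤ)) hγ

theorem sum_monomial_filter_pdeg_eq_leadingWeightedForm (ν : Fin n ⊕ Fin n → ℕ) (p : KXY K n) :
    ∑ γ ∈ p.support.filter (fun γ => ((wt n ν γ : ℤ) : WithBot ℤ) = pdeg n ν p),
      monomial γ (coeff γ p) = leadingWeightedForm ν p := by
  classical
  rcases eq_or_ne p 0 with rfl | hp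
  · simp [leadingWeightedForm_zero]
  rw [leadingWeightedForm, weightedHomogeneousComponent_apply, pdeg_of_ne_zero ν hp]
  refine Finset.sum_congr (Finset.filter_congr fun γ _ => ?_) fun _ _ => rfl
  rw [wt_eq_weight]
  exact_mod_cast Iff.rfl

theorem psymb_eq_leadingWeightedForm (ν : Fin n ⊕ Fin n → ℕ) (p : KXY K n) :
    psymb n ν p = leadingWeightedForm ν p :=
  sum_monomial_filter_pdeg_eq_leadingWeightedForm ν p

variable (b : Module.Basis (Exps n) K (weylAlg K n))

noncomputable def normalForm (w : weylAlg K n) : KXY K n :=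
  AddMonoidAlgebra.ofCoeff (b.repr w)

theorem normalForm_zero : normalForm b 0 = 0 := by
  simp [normalForm]

theorem normalForm_ne_zero {w : weylAlg K n} (hw : w ≠ 0) : normalForm b w ≠ 0 := by
  simpa [normalForm] using hw

theorem wdeg_eq_pdeg_normalForm (ν : Fin n ⊕ Fin n → ℕ) (w : weylAlg K n) :
    wdeg b ν w = pdeg n ν (normalForm b w) :=
  rfl

theorem symb_eq_leadingWeightedForm (ω : Fin n ⊕ Fin n → ℕ) (w : weylAlg K n) :
    symb b ω w = leadingWeightedForm ω (normalForm b w) :=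
  sum_monomial_filter_pdeg_eq_leadingWeightedForm ω (normalForm b w)

end WeylPaper

open WeylPaper MvPolynomial in
theorem statement_5_general (n : ℕ) (K : Type) [Field K]
    (b : Module.Basis (Exps n) K (weylAlg K n))
    (w : weylAlg K n) (ν : Fin n ⊕ Fin n → ℕ) (ω : Fin n ⊕ Fin n → ℕ) :
    ∀ s : ℕ, 0 < s →
      (w = 0 ∨ wdeg b ν w < ((s : ℤ) : WithBot ℤ) + pdeg n ν (symb b ω w)) →
      psymb n ν (symb b ω w) = symb b (fun j => ν j + s * ω j) w := by
  intro s hs hdeg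
  rw [symb_eq_leadingWeightedForm, symb_eq_leadingWeightedForm, psymb_eq_leadingWeightedForm]
  refine leadingWeightedForm_leadingWeightedForm (ν := ν) (ω := ω) (s := s) ?_
  rcases eq_or_ne w 0 with rfl | hw
  · simpa [normalForm_zero, leadingWeightedForm_zero] using hs
  have hlt := hdeg.resolve_left hw
  have hw' := normalForm_ne_zero b hw
  rw [wdeg_eq_pdeg_normalForm, symb_eq_leadingWeightedForm, pdeg_of_ne_zero ν hw',
    pdeg_of_ne_zero ν (leadingWeightedForm_ne_zero ω hw')] at hlt
  exact_mod_cast hlt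

open WeylPaper MvPolynomial in
/-- for all `s ∈ ℕ` with `s > deg^ν(w) - deg^ν(σ^ω(w))` one has
`τ^ν(σ^ω(w)) = σ^{ν+sω}(w)` in `K[X,Y]` (for `w = 0` both sides are `0` and the claim
holds for every `s`). -/
theorem statement_5 (n : ℕ) (hn : 0 < n) (K : Type) [Field K] [CharZero K]
    (b : Module.Basis (Exps n) K (weylAlg K n)) (hb : IsMonomialBasis b)
    (w : weylAlg K n) (ν : Fin n ⊕ Fin n → ℕ) (ω : Fin n ⊕ Fin n → ℕ) (hω : inOmega n ω) :
    ∀ s : ℕ, 0 < s →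
      (w = 0 ∨ wdeg b ν w < ((s : ℤ) : WithBot ℤ) + pdeg n ν (symb b ω w)) →
      psymb n ν (symb b ω w) = symb b (fun j => ν j + s * ω j) w :=
  statement_5_general n K b w ν ω
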